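/- Let n ≥ 1 and let e, f be projections in D_n. Then e and f are Murray–von Neumann equivalent in D_n (i.e., there exist x, y ∈ D_n with e = x·y and f = y·x) if and only if the trace of the upper-left n×n block of e(0) equals the trace of the upper-left n×n block of f(0) and the trace of the lower-right n×n block of e(0) equals the trace of the lower-right n×n block of f(0). (This is the content of Corollary 10.5, that evaluation at 0 induces an isomorphism V(D) ≅ ℤ⁺ × ℤ⁺, stated for projections in matrix algebras over D.) -/

import Mathlib

open unitInterval

/-- `D_n`: the C*-subalgebra of `C([0,1], M_{2n}(ℂ))` (indices split as
`Fin n ⊕ Fin n`) consisting of the continuous functions `x` such that `x(0)` is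
block-diagonal with two `n × n` blocks. -/
def Dn (n : ℕ) : Set C(I, Matrix (Fin n ⊕ Fin n) (Fin n ⊕ Fin n) ℂ) :=
  {x | ∀ i j : Fin n ⊕ Fin n, i.isLeft ≠ j.isLeft → x 0 i j = 0}

/-!
If `e = xy` and `f = yx` with `x(0)`, `y(0)` block diagonal, the diagonal blocks of `e(0)` and
`f(0)` are `xᵢyᵢ` and `yᵢxᵢ`, which have the same trace.

Conversely, idempotent matrices with the same trace have the same rank, hence are similar; so
`e(0)` and `f(0)` are conjugate by a block-diagonal invertible `s`. A path of projections `p` is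
conjugate to the constant path `p(0)` by a continuous path of invertibles starting at `1`: cut
`[0,1]` into steps on which `p` moves by less than `1` and multiply the intertwiners
`qp + (1 - q)(1 - p)`, which are invertible when `‖p - q‖ < 1`. Composing gives an invertible
`w ∈ C([0,1], M_{2n})` with `w(0) = s` and `w e = f w`, and then `x = e w⁻¹`, `y = w e` lie in
`D_n`.
-/

lemma IsConj.prod {M N : Type*} [Monoid M] [Monoid N] {a₁ b₁ : M} {a₂ b₂ : N}
    (h₁ : IsConj a₁ b₁) (h₂ : IsConj a₂ b₂) : IsConj (a₁, a₂) (b₁, b₂) := by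
  obtain ⟨c₁, hc₁⟩ := h₁
  obtain ⟨c₂, hc₂⟩ := h₂
  exact ⟨MulEquiv.prodUnits.symm (c₁, c₂), Prod.semiconjBy_iff.mpr ⟨hc₁, hc₂⟩⟩

lemma IsIdempotentElem.eq_mul_and_eq_mul_of_semiconjBy {M : Type*} [Monoid M] {e f : M}
    (he : IsIdempotentElem e) {u : Mˣ} (hu : SemiconjBy (u : M) e f) :
    e = e * ↑u⁻¹ * (↑u * e) ∧ f = ↑u * e * (e * ↑u⁻¹) := by
  constructor
  · rw [mul_assoc, u.inv_mul_cancel_left, he.eq]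
  · rw [mul_assoc, ← mul_assoc e, he.eq, ← mul_assoc, hu.eq, mul_assoc, u.mul_inv, mul_one]

lemma ContinuousMap.isStarProjection_apply {X A : Type*} [TopologicalSpace X] [TopologicalSpace A]
    [Mul A] [ContinuousMul A] [Star A] [ContinuousStar A] {p : C(X, A)} (hp : IsStarProjection p)
    (x : X) : IsStarProjection (p x) :=
  ⟨ContinuousMap.congr_fun hp.isIdempotentElem x, ContinuousMap.congr_fun hp.isSelfAdjoint x⟩

open Module LinearMap in
theorem LinearMap.isConj_of_finrank_range_eq {K V : Type*} [Field K] [AddCommGroup V] [Module K V]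
    [FiniteDimensional K V] {f g : Module.End K V} (hf : IsIdempotentElem f)
    (hg : IsIdempotentElem g) (h : finrank K (range f) = finrank K (range g)) : IsConj f g := by
  -- Both maps are `id × 0` on `range ⊕ ker`; match the summands by dimension.
  have hker : finrank K (ker f) = finrank K (ker g) := by
    have := finrank_range_add_finrank_ker f
    have := finrank_range_add_finrank_ker g
    omega
  set Φ := (LinearEquiv.ofFinrankEq _ _ h).prodCongr (LinearEquiv.ofFinrankEq _ _ hker)
  have hΦ : Φ.conj (prodMap id 0) = prodMap id 0 := by
    ext ⟨a, b⟩ <;> simp [Φ, LinearEquiv.conj_apply]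
  set e₁ := (range f).prodEquivOfIsCompl (ker f) hf.isProj_range.isCompl
  set e₂ := (range g).prodEquivOfIsCompl (ker g) hg.isProj_range.isCompl
  set T := e₁.symm ≪≫ₗ (Φ ≪≫ₗ e₂)
  have hT : T.conj f = g := by
    rw [hf.isProj_range.eq_conj_prodMap, hg.isProj_range.eq_conj_prodMap, ← hΦ,
      ← LinearEquiv.trans_apply, LinearEquiv.conj_trans, ← LinearEquiv.trans_apply,
      LinearEquiv.conj_trans, ← LinearEquiv.trans_assoc, LinearEquiv.self_trans_symm,
      LinearEquiv.refl_trans]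
  refine ⟨(GeneralLinearGroup.generalLinearEquiv K V).symm T, ?_⟩
  rw [← hT]
  ext x
  simp [LinearEquiv.conj_apply, GeneralLinearGroup.generalLinearEquiv]

open Matrix LinearMap in
theorem Matrix.isConj_of_trace_eq {K n : Type*} [Field K] [CharZero K] [Fintype n] [DecidableEq n]
    {E F : Matrix n n K} (hE : IsIdempotentElem E) (hF : IsIdempotentElem F)
    (h : E.trace = F.trace) : IsConj E F := by
  have hE' := hE.map toLinAlgEquiv'
  have hF' := hF.map toLinAlgEquiv'
  -- The trace of an idempotent is its rank.
  have key := LinearMap.isConj_of_finrank_range_eq hE' hF' <| Nat.cast_injective (R := K) <| by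
    rw [← hE'.isProj_range.trace, ← hF'.isProj_range.trace]
    exact E.trace_toLin'_eq.trans (h.trans F.trace_toLin'_eq.symm)
  simpa using (toLinAlgEquiv' (R := K) (n := n)).symm.toMonoidHom.map_isConj key

namespace Matrix

variable (m n α : Type*) [Fintype m] [Fintype n] [DecidableEq m] [DecidableEq n] [Semiring α]

def fromBlocksDiagHom : Matrix m m α × Matrix n n α →* Matrix (m ⊕ n) (m ⊕ n) α where
  toFun P := fromBlocks P.1 0 0 P.2
  map_one' := fromBlocks_one
  map_mul' P Q := by simp [fromBlocks_multiply]

variable {m n α}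

lemma fromBlocksDiagHom_injective : Function.Injective (fromBlocksDiagHom m n α) :=
  fun P Q h => by
    obtain ⟨h₁, -, -, h₂⟩ := fromBlocks_inj.mp h
    exact Prod.ext h₁ h₂

lemma sum_inl_fromBlocksDiagHom (P : Matrix m m α × Matrix n n α) :
    ∑ i, fromBlocksDiagHom m n α P (.inl i) (.inl i) = P.1.trace := rfl

lemma sum_inr_fromBlocksDiagHom (P : Matrix m m α × Matrix n n α) :
    ∑ i, fromBlocksDiagHom m n α P (.inr i) (.inr i) = P.2.trace := rfl

lemma sum_diag_mul_comm_of_mem_mrange {R : Type*} [CommSemiring R]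
    {X Y : Matrix (m ⊕ n) (m ⊕ n) R} (hX : X ∈ MonoidHom.mrange (fromBlocksDiagHom m n R))
    (hY : Y ∈ MonoidHom.mrange (fromBlocksDiagHom m n R)) :
    (∑ i, (X * Y) (.inl i) (.inl i) = ∑ i, (Y * X) (.inl i) (.inl i)) ∧
      (∑ i, (X * Y) (.inr i) (.inr i) = ∑ i, (Y * X) (.inr i) (.inr i)) := by
  obtain ⟨P, rfl⟩ := hX
  obtain ⟨Q, rfl⟩ := hY
  simp only [← map_mul, sum_inl_fromBlocksDiagHom, sum_inr_fromBlocksDiagHom, Prod.fst_mul,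
    Prod.snd_mul]
  exact ⟨trace_mul_comm _ _, trace_mul_comm _ _⟩

theorem exists_fromBlocksDiagHom_semiconj {K : Type*} [Field K] [CharZero K]
    {E F : Matrix (m ⊕ n) (m ⊕ n) K} (hE : IsIdempotentElem E) (hF : IsIdempotentElem F)
    (hEb : E ∈ MonoidHom.mrange (fromBlocksDiagHom m n K))
    (hFb : F ∈ MonoidHom.mrange (fromBlocksDiagHom m n K))
    (h₁ : ∑ i, E (.inl i) (.inl i) = ∑ i, F (.inl i) (.inl i))
    (h₂ : ∑ i, E (.inr i) (.inr i) = ∑ i, F (.inr i) (.inr i)) :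
    ∃ c : (Matrix m m K × Matrix n n K)ˣ, SemiconjBy (fromBlocksDiagHom m n K c) E F := by
  obtain ⟨P, rfl⟩ := hEb
  obtain ⟨Q, rfl⟩ := hFb
  have hP : IsIdempotentElem P := fromBlocksDiagHom_injective ((map_mul _ _ _).trans hE.eq)
  have hQ : IsIdempotentElem Q := fromBlocksDiagHom_injective ((map_mul _ _ _).trans hF.eq)
  rw [sum_inl_fromBlocksDiagHom, sum_inl_fromBlocksDiagHom] at h₁
  rw [sum_inr_fromBlocksDiagHom, sum_inr_fromBlocksDiagHom] at h₂
  obtain ⟨c, hc⟩ :=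
    (isConj_of_trace_eq (hP.map (MonoidHom.fst _ _)) (hQ.map (MonoidHom.fst _ _)) h₁).prod
      (isConj_of_trace_eq (hP.map (MonoidHom.snd _ _)) (hQ.map (MonoidHom.snd _ _)) h₂)
  exact ⟨c, hc.map _⟩

end Matrix

open Matrix in
lemma mem_Dn_iff {n : ℕ} {x : C(I, Matrix (Fin n ⊕ Fin n) (Fin n ⊕ Fin n) ℂ)} :
    x ∈ Dn n ↔ x 0 ∈ MonoidHom.mrange (fromBlocksDiagHom (Fin n) (Fin n) ℂ) := by
  constructor
  · intro hx
    refine ⟨((x 0).toBlocks₁₁, (x 0).toBlocks₂₂), ?_⟩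
    ext (i | i) (j | j)
    · rfl
    · exact (hx _ _ (by simp)).symm
    · exact (hx _ _ (by simp)).symm
    · rfl
  · rintro ⟨P, hP⟩ (i | i) (j | j) hij <;> simp_all [← hP, fromBlocksDiagHom]

section Ring

variable {A : Type*} [Ring A]

def intertwiner (q p : A) : A := q * p + (1 - q) * (1 - p)

lemma intertwiner_self {p : A} (hp : IsIdempotentElem p) : intertwiner p p = 1 := by
  have : p * p + (1 - p) * (1 - p) = 1 + 2 * (p * p - p) := by noncomm_ring
  rw [intertwiner, this, hp.eq, sub_self, mul_zero, add_zero]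

lemma intertwiner_mul_right {q p : A} (hq : IsIdempotentElem q) (hp : IsIdempotentElem p) :
    intertwiner q p * p = q * intertwiner q p := by
  have h₁ : intertwiner q p * p = q * (p * p) + (1 - q) * (p - p * p) := by
    rw [intertwiner]; noncomm_ring
  have h₂ : q * intertwiner q p = (q * q) * p + (q - q * q) * (1 - p) := by
    rw [intertwiner]; noncomm_ring
  rw [h₁, h₂, hp.eq, hq.eq, sub_self, sub_self, zero_mul, mul_zero]

lemma intertwiner_eq_one_sub {q p : A} (hq : IsIdempotentElem q) :
    intertwiner q p = 1 - (2 * q - 1) * (q - p) := by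
  have : 1 - (2 * q - 1) * (q - p) = intertwiner q p - 2 * (q * q - q) := by
    rw [intertwiner]; noncomm_ring
  rw [this, hq.eq, sub_self, mul_zero, sub_zero]

def intertwinerChain (Q : ℝ → A) (h : ℝ) : ℕ → ℝ → A
  | 0, _ => 1
  | k + 1, t =>
    intertwiner (Q (min t (↑(k + 1) * h))) (Q (min t (k * h))) * intertwinerChain Q h k t

variable {Q : ℝ → A} {h : ℝ}

lemma intertwinerChain_apply_zero (hh : 0 ≤ h) (hQ : IsIdempotentElem (Q 0)) :
    ∀ k, intertwinerChain Q h k 0 = 1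
  | 0 => rfl
  | k + 1 => by
    rw [intertwinerChain, intertwinerChain_apply_zero hh hQ k, mul_one,
      min_eq_left (by positivity), min_eq_left (by positivity), intertwiner_self hQ]

lemma intertwinerChain_mul (hQ : ∀ s, IsIdempotentElem (Q s)) {t : ℝ} (ht : 0 ≤ t) :
    ∀ k, intertwinerChain Q h k t * Q 0 = Q (min t (k * h)) * intertwinerChain Q h k t
  | 0 => by simp [intertwinerChain, ht]
  | k + 1 => by
    rw [intertwinerChain, mul_assoc, intertwinerChain_mul hQ ht k, ← mul_assoc,
      intertwiner_mul_right (hQ _) (hQ _), mul_assoc]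

lemma continuous_intertwinerChain [TopologicalSpace A] [IsTopologicalRing A]
    (hQ : Continuous Q) : ∀ k, Continuous (intertwinerChain Q h k)
  | 0 => continuous_const
  | k + 1 => by
    have hQ' (c : ℝ) : Continuous fun t => Q (min t c) :=
      hQ.comp (continuous_id.min continuous_const)
    exact (((hQ' _).mul (hQ' _)).add ((continuous_const.sub (hQ' _)).mul
      (continuous_const.sub (hQ' _)))).mul (continuous_intertwinerChain hQ k)

end Ring

section CStarRing

variable {A : Type*} [NormedRing A] [StarRing A] [CStarRing A] [CompleteSpace A]

lemma isUnit_intertwiner {q p : A} (hq : IsStarProjection q) (hpq : ‖p - q‖ < 1) :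
    IsUnit (intertwiner q p) := by
  nontriviality A
  rw [intertwiner_eq_one_sub hq.isIdempotentElem]
  refine (Units.oneSub _ ?_).isUnit
  calc ‖(2 * q - 1) * (q - p)‖ ≤ ‖2 * q - 1‖ * ‖q - p‖ := norm_mul_le _ _
    _ < 1 := by
      rwa [CStarRing.norm_of_mem_unitary hq.two_mul_sub_one_mem_unitary, one_mul, norm_sub_rev]

lemma isUnit_intertwinerChain {Q : ℝ → A} {h : ℝ} (hh : 0 ≤ h)
    (hQ : ∀ s, IsStarProjection (Q s))
    (hclose : ∀ s s', dist s s' ≤ h → dist (Q s) (Q s') < 1)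
    (t : ℝ) : ∀ k, IsUnit (intertwinerChain Q h k t)
  | 0 => isUnit_one
  | k + 1 => by
    refine (isUnit_intertwiner (hQ _) ?_).mul (isUnit_intertwinerChain hh hQ hclose t k)
    rw [← dist_eq_norm]
    refine hclose _ _ ((abs_min_sub_min_le_max _ _ _ _).trans ?_)
    rw [sub_self, abs_zero, Nat.cast_succ, show (k : ℝ) * h - (k + 1) * h = -h by ring, abs_neg,
      abs_of_nonneg hh, max_eq_right hh]

theorem exists_unitsPath_semiconj {p : C(I, A)} (hp : IsStarProjection p) :
    ∃ u : C(I, Aˣ), u 0 = 1 ∧ ∀ t, SemiconjBy ↑(u t) (p 0) (p t) := by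
  set Q := ContinuousMap.IccExtend zero_le_one p
  have hQ (s : ℝ) : IsStarProjection (Q s) := ContinuousMap.isStarProjection_apply hp _
  have hQp (t : I) : Q t = p t := by simp [Q]
  have hQuc : UniformContinuous Q :=
    (CompactSpace.uniformContinuous_of_continuous p.continuous).comp
      (LipschitzWith.projIcc zero_le_one).uniformContinuous
  obtain ⟨δ, hδ, hQδ⟩ := Metric.uniformContinuous_iff.mp hQuc 1 one_pos
  have hclose (s s' : ℝ) (hss' : dist s s' ≤ δ / 2) : dist (Q s) (Q s') < 1 :=
    hQδ (hss'.trans_lt (half_lt_self hδ))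
  obtain ⟨K, hK⟩ := exists_nat_ge (2 / δ)
  have hK : 1 ≤ K * (δ / 2) := by
    rw [div_le_iff₀ hδ] at hK; linarith
  let v : C(I, A) := ⟨fun t => intertwinerChain Q (δ / 2) K t,
    (continuous_intertwinerChain Q.continuous K).comp continuous_subtype_val⟩
  refine ⟨ContinuousMap.unitsOfForallIsUnit (f := v)
    fun t => isUnit_intertwinerChain (by positivity) hQ hclose _ K, ?_, fun t => ?_⟩
  · ext
    simp [v, intertwinerChain_apply_zero (by positivity : 0 ≤ δ / 2) (hQ 0).isIdempotentElem]
  · have := intertwinerChain_mul (h := δ / 2) (fun s => (hQ s).isIdempotentElem) t.2.1 K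
    rwa [min_eq_left (t.2.2.trans hK), hQp, show Q 0 = p 0 from hQp 0] at this

theorem exists_units_semiconj_of_semiconj_zero {p q : C(I, A)} (hp : IsStarProjection p)
    (hq : IsStarProjection q) {s : Aˣ} (hs : SemiconjBy ↑s (p 0) (q 0)) :
    ∃ w : C(I, A)ˣ,
      SemiconjBy ↑w p q ∧ (↑w : C(I, A)) 0 = ↑s ∧ (↑w⁻¹ : C(I, A)) 0 = ↑s⁻¹ := by
  obtain ⟨u, hu0, hu⟩ := exists_unitsPath_semiconj hp
  obtain ⟨v, hv0, hv⟩ := exists_unitsPath_semiconj hq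
  refine ⟨ContinuousMap.unitsLift (v * ContinuousMap.const I s * u⁻¹),
    ContinuousMap.ext fun t => ((hv t).mul_left hs).mul_left (hu t).units_inv_symm_left, ?_, ?_⟩
  <;> simp [hu0, hv0]

end CStarRing

theorem stmt12_general (n : ℕ)
    (e f : C(I, Matrix (Fin n ⊕ Fin n) (Fin n ⊕ Fin n) ℂ))
    (he : e ∈ Dn n) (hf : f ∈ Dn n)
    (he_sa : star e = e) (he_idem : e * e = e)
    (hf_sa : star f = f) (hf_idem : f * f = f) :
    (∃ x y : C(I, Matrix (Fin n ⊕ Fin n) (Fin n ⊕ Fin n) ℂ),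
        x ∈ Dn n ∧ y ∈ Dn n ∧ e = x * y ∧ f = y * x) ↔
      (∑ i : Fin n, e 0 (Sum.inl i) (Sum.inl i) = ∑ i : Fin n, f 0 (Sum.inl i) (Sum.inl i)) ∧
      (∑ i : Fin n, e 0 (Sum.inr i) (Sum.inr i) = ∑ i : Fin n, f 0 (Sum.inr i) (Sum.inr i)) := by
  constructor
  · rintro ⟨x, y, hx, hy, rfl, rfl⟩
    exact Matrix.sum_diag_mul_comm_of_mem_mrange (mem_Dn_iff.mp hx) (mem_Dn_iff.mp hy)
  · rintro ⟨h₁, h₂⟩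
    have he' : IsStarProjection e := ⟨he_idem, he_sa⟩
    have hf' : IsStarProjection f := ⟨hf_idem, hf_sa⟩
    obtain ⟨c, hc⟩ := Matrix.exists_fromBlocksDiagHom_semiconj
      (ContinuousMap.isStarProjection_apply he' 0).isIdempotentElem
      (ContinuousMap.isStarProjection_apply hf' 0).isIdempotentElem
      (mem_Dn_iff.mp he) (mem_Dn_iff.mp hf) h₁ h₂
    -- The operator norm makes the matrices a C⋆-algebra without changing their topology.
    open scoped Matrix.Norms.L2Operator in
    obtain ⟨w, hw, hw0, hw0'⟩ := exists_units_semiconj_of_semiconj_zero he' hf'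
      (s := Units.map (Matrix.fromBlocksDiagHom (Fin n) (Fin n) ℂ) c) hc
    obtain ⟨hexy, hfyx⟩ := he'.isIdempotentElem.eq_mul_and_eq_mul_of_semiconjBy hw
    refine ⟨_, _, mem_Dn_iff.mpr ?_, mem_Dn_iff.mpr ?_, hexy, hfyx⟩
    · rw [ContinuousMap.mul_apply, hw0']
      exact mul_mem (mem_Dn_iff.mp he) ⟨_, rfl⟩
    · rw [ContinuousMap.mul_apply, hw0]
      exact mul_mem ⟨_, rfl⟩ (mem_Dn_iff.mp he)

/-- **Corollary 10.5** (stated for projections in matrix algebras over `D`). Two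
projections `e, f` of `D_n` are Murray–von Neumann equivalent in `D_n` if and only if
the traces of the upper-left `n × n` blocks of `e(0)` and `f(0)` agree and the traces
of the lower-right `n × n` blocks of `e(0)` and `f(0)` agree. -/
theorem stmt12 (n : ℕ) (hn : 1 ≤ n)
    (e f : C(I, Matrix (Fin n ⊕ Fin n) (Fin n ⊕ Fin n) ℂ))
    (he : e ∈ Dn n) (hf : f ∈ Dn n)
    (he_sa : star e = e) (he_idem : e * e = e)
    (hf_sa : star f = f) (hf_idem : f * f = f) :
    (∃ x y : C(I, Matrix (Fin n ⊕ Fin n) (Fin n ⊕ Fin n) ℂ),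
        x ∈ Dn n ∧ y ∈ Dn n ∧ e = x * y ∧ f = y * x) ↔
      (∑ i : Fin n, e 0 (Sum.inl i) (Sum.inl i) = ∑ i : Fin n, f 0 (Sum.inl i) (Sum.inl i)) ∧
      (∑ i : Fin n, e 0 (Sum.inr i) (Sum.inr i) = ∑ i : Fin n, f 0 (Sum.inr i) (Sum.inr i)) :=
  stmt12_general n e f he hf he_sa he_idem hf_sa hf_idem
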